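/- Let B^{ij}[φ](p) = 2 p^i p^j/(e^{2φ}+|p|²)^{3/2} − |p|² D^{ij}[φ](p)/(e^{2φ}+|p|²)². Then there is a constant C such that for all x ∈ ℝ³, B^{ij}[φ] x_i x_j ≤ C e^{−φ} |x|². -/

import Mathlib

noncomputable def Dmat (φ : ℝ) (p : EuclideanSpace ℝ (Fin 3)) (i j : Fin 3) : ℝ :=
  (Real.exp (2 * φ) * (if i = j then 1 else 0) + p i * p j) /
    Real.sqrt (Real.exp (2 * φ) + ‖p‖ ^ 2)

/-!
With `E = e^{2φ} + |p|²`, the quadratic form of `B` is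
`2 ⟨p, x⟩² / E^{3/2} - |p|² (D x · x) / E²`, and `D x · x = (e^{2φ} |x|² + ⟨p, x⟩²) / √E ≥ 0`.
Dropping the second term, Cauchy–Schwarz and `|p|² ≤ E` give `2 |x|² / √E`, and `√E ≥ e^φ`,
so `C = 2` works.
-/

open Real Finset
open scoped InnerProductSpace

section QuadraticForms

variable {ι : Type*} [Fintype ι]

lemma sum_sum_mul_mul_mul_eq_inner_sq (p x : EuclideanSpace ℝ ι) :
    ∑ i, ∑ j, p i * p j * x i * x j = ⟪p, x⟫_ℝ ^ 2 := by
  simp only [PiLp.inner_apply, RCLike.inner_apply, conj_trivial, sq, sum_mul_sum]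
  exact sum_congr rfl fun i _ => sum_congr rfl fun j _ => by ring

lemma sum_sum_ite_mul_mul_eq_norm_sq [DecidableEq ι] (x : EuclideanSpace ℝ ι) :
    ∑ i, ∑ j, (if i = j then (1 : ℝ) else 0) * x i * x j = ‖x‖ ^ 2 := by
  rw [EuclideanSpace.real_norm_sq_eq]
  simp [sq]

lemma two_mul_inner_sq_div_rpow_le (φ : ℝ) (p x : EuclideanSpace ℝ ι) :
    2 * ⟪p, x⟫_ℝ ^ 2 / (exp (2 * φ) + ‖p‖ ^ 2) ^ ((3 : ℝ) / 2) ≤ 2 * exp (-φ) * ‖x‖ ^ 2 := by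
  set E := exp (2 * φ) + ‖p‖ ^ 2
  have hE : 0 < E := by positivity
  have hp : ‖p‖ ^ 2 ≤ E := le_add_of_nonneg_left (exp_pos _).le
  have hsqrt : exp φ ≤ E ^ ((1 : ℝ) / 2) :=
    calc exp φ = exp (2 * φ) ^ ((1 : ℝ) / 2) := by rw [← exp_mul]; ring_nf
      _ ≤ E ^ ((1 : ℝ) / 2) := by gcongr; exact le_add_of_nonneg_right (by positivity)
  have hCS : ⟪p, x⟫_ℝ ^ 2 ≤ E * ‖x‖ ^ 2 :=
    calc ⟪p, x⟫_ℝ ^ 2 ≤ (‖p‖ * ‖x‖) ^ 2 := by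
          rw [← sq_abs]; exact pow_le_pow_left₀ (abs_nonneg _) (abs_real_inner_le_norm p x) 2
      _ ≤ E * ‖x‖ ^ 2 := by rw [mul_pow]; gcongr
  calc 2 * ⟪p, x⟫_ℝ ^ 2 / E ^ ((3 : ℝ) / 2)
      ≤ 2 * (E * ‖x‖ ^ 2) / (E * E ^ ((1 : ℝ) / 2)) := by
        rw [show (3 : ℝ) / 2 = 1 + 1 / 2 by norm_num, rpow_add hE, rpow_one]; gcongr
    _ = 2 * ‖x‖ ^ 2 / E ^ ((1 : ℝ) / 2) := by field_simp
    _ ≤ 2 * ‖x‖ ^ 2 / exp φ := by gcongr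
    _ = 2 * exp (-φ) * ‖x‖ ^ 2 := by rw [exp_neg]; ring

end QuadraticForms

lemma sum_sum_Dmat_mul_mul (φ : ℝ) (p x : EuclideanSpace ℝ (Fin 3)) :
    ∑ i, ∑ j, Dmat φ p i j * x i * x j =
      (exp (2 * φ) * ‖x‖ ^ 2 + ⟪p, x⟫_ℝ ^ 2) / √(exp (2 * φ) + ‖p‖ ^ 2) := by
  have h : ∀ i j, Dmat φ p i j * x i * x j =
      (exp (2 * φ) * ((if i = j then 1 else 0) * x i * x j) + p i * p j * x i * x j) /
        √(exp (2 * φ) + ‖p‖ ^ 2) := fun i j => by unfold Dmat; ring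
  simp_rw [h, ← sum_div, sum_add_distrib, ← mul_sum, sum_sum_ite_mul_mul_eq_norm_sq,
    sum_sum_mul_mul_mul_eq_inner_sq]

lemma sum_sum_Dmat_mul_mul_nonneg (φ : ℝ) (p x : EuclideanSpace ℝ (Fin 3)) :
    0 ≤ ∑ i, ∑ j, Dmat φ p i j * x i * x j := by
  rw [sum_sum_Dmat_mul_mul]; positivity

theorem stmt_12 : ∃ C : ℝ, 0 < C ∧
    ∀ (φ : ℝ) (p x : EuclideanSpace ℝ (Fin 3)),
      ∑ i, ∑ j, (2 * p i * p j / (Real.exp (2 * φ) + ‖p‖ ^ 2) ^ ((3 : ℝ) / 2) -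
          ‖p‖ ^ 2 * Dmat φ p i j / (Real.exp (2 * φ) + ‖p‖ ^ 2) ^ 2) * x i * x j ≤
        C * Real.exp (-φ) * ‖x‖ ^ 2 := by
  refine ⟨2, two_pos, fun φ p x => ?_⟩
  set E := exp (2 * φ) + ‖p‖ ^ 2
  have h : ∀ i j,
      (2 * p i * p j / E ^ ((3 : ℝ) / 2) - ‖p‖ ^ 2 * Dmat φ p i j / E ^ 2) * x i * x j =
        2 / E ^ ((3 : ℝ) / 2) * (p i * p j * x i * x j) -
          ‖p‖ ^ 2 / E ^ 2 * (Dmat φ p i j * x i * x j) :=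
    fun i j => by ring
  simp_rw [h, sum_sub_distrib, ← mul_sum, sum_sum_mul_mul_mul_eq_inner_sq]
  have hD : 0 ≤ ‖p‖ ^ 2 / E ^ 2 * ∑ i, ∑ j, Dmat φ p i j * x i * x j :=
    mul_nonneg (by positivity) (sum_sum_Dmat_mul_mul_nonneg φ p x)
  calc _ ≤ 2 / E ^ ((3 : ℝ) / 2) * ⟪p, x⟫_ℝ ^ 2 := sub_le_self _ hD
    _ = 2 * ⟪p, x⟫_ℝ ^ 2 / E ^ ((3 : ℝ) / 2) := by ring
    _ ≤ 2 * exp (-φ) * ‖x‖ ^ 2 := two_mul_inner_sq_div_rpow_le φ p x
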